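/- Let T > 0, let f : ℝ → ℝ be a continuously differentiable T-periodic function, and let α ∈ (0,1). If the Caputo fractional derivative ᶜD^α f(t) = (1/Γ(1−α)) ∫₀ᵗ (t−s)^{−α} f′(s) ds is bounded on (0,∞), then ᶜD^α f is S-asymptotically T-periodic: it is continuous and bounded on (0,∞) and lim_{t→+∞} [ᶜD^α f(t+T) − ᶜD^α f(t)] = 0. -/

import Mathlib

open MeasureTheory intervalIntegral Filter Set

/-!
Write `g = f'`, which is continuous, `T`-periodic and hence bounded, say by `C`. The substitution
`s = t v` turns `∫₀ᵗ (t - s)^(-α) g(s) ds` into `t^(1-α) ∫₀¹ (1 - v)^(-α) g(t v) dv`, continuous in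
`t > 0` by dominated convergence. Shifting `s ↦ s + T` in the integral at `t + T` and using
periodicity, the difference of the values at `t + T` and `t` is `∫_{-T}^0 (t - u)^(-α) g(u) du`,
which is at most `C T t^(-α) → 0`.
-/

theorem Function.Periodic.deriv {𝕜 F : Type*} [NontriviallyNormedField 𝕜] [NormedAddCommGroup F]
    [NormedSpace 𝕜 F] {f : 𝕜 → F} {T : 𝕜} (h : Function.Periodic f T) :
    Function.Periodic (deriv f) T := fun x => by
  rw [← deriv_comp_add_const, show (fun y => f (y + T)) = f from funext h]

theorem intervalIntegrable_sub_rpow {r : ℝ} (hr : -1 < r) (a t : ℝ) :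
    IntervalIntegrable (fun s : ℝ => (t - s) ^ r) volume a t := by
  simpa using ((intervalIntegrable_rpow' hr (a := 0) (b := t - a)).comp_sub_left t).symm

/-- `abelIntegral α (deriv f) t / Γ(1 - α)` is the Caputo derivative `ᶜD^α f (t)`. -/
noncomputable def abelIntegral (α : ℝ) (g : ℝ → ℝ) (t : ℝ) : ℝ :=
  ∫ s in (0 : ℝ)..t, (t - s) ^ (-α) * g s

section AbelIntegral

variable {α C T : ℝ} {g : ℝ → ℝ}

theorem intervalIntegrable_sub_rpow_neg_mul (hα : α < 1) (hg : Continuous g) (a t : ℝ) :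
    IntervalIntegrable (fun s => (t - s) ^ (-α) * g s) volume a t :=
  (intervalIntegrable_sub_rpow (by linarith) a t).mul_continuousOn hg.continuousOn

theorem abelIntegral_eq_rpow_mul_integral_unitInterval (α : ℝ) (g : ℝ → ℝ) {t : ℝ} (ht : 0 < t) :
    abelIntegral α g t = t ^ (1 - α) * ∫ v in (0 : ℝ)..1, (1 - v) ^ (-α) * g (t * v) := by
  have hsubst := smul_integral_comp_mul_left (a := 0) (b := 1)
    (fun s => (t - s) ^ (-α) * g s) t
  simp only [mul_zero, mul_one, smul_eq_mul] at hsubst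
  have hfactor : ∫ v in (0 : ℝ)..1, (t - t * v) ^ (-α) * g (t * v)
      = t ^ (-α) * ∫ v in (0 : ℝ)..1, (1 - v) ^ (-α) * g (t * v) := by
    rw [← intervalIntegral.integral_const_mul]
    refine integral_congr fun v hv => ?_
    rw [uIcc_of_le zero_le_one] at hv
    rw [show t - t * v = t * (1 - v) by ring, Real.mul_rpow ht.le (by linarith [hv.2]), mul_assoc]
  rw [abelIntegral, ← hsubst, hfactor, ← mul_assoc, sub_eq_add_neg, Real.rpow_add ht,
    Real.rpow_one]

theorem continuous_integral_unitInterval (hα : α < 1) (hg : Continuous g) (hC : ∀ s, ‖g s‖ ≤ C) :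
    Continuous fun t => ∫ v in (0 : ℝ)..1, (1 - v) ^ (-α) * g (t * v) := by
  refine continuous_of_dominated_interval (bound := fun v => (1 - v) ^ (-α) * C) ?_ ?_ ?_ ?_
  · exact fun t => (((measurable_id.const_sub 1).pow_const _).mul
      (hg.comp (continuous_const.mul continuous_id)).measurable).aestronglyMeasurable
  · refine fun t => Eventually.of_forall fun v hv => ?_
    rw [uIoc_of_le zero_le_one] at hv
    have hkernel : 0 ≤ (1 - v) ^ (-α) := Real.rpow_nonneg (by linarith [hv.2]) _
    rw [norm_mul, Real.norm_of_nonneg hkernel]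
    exact mul_le_mul_of_nonneg_left (hC _) hkernel
  · simpa using (intervalIntegrable_sub_rpow (by linarith) 0 1).mul_const C
  · exact Eventually.of_forall fun v _ =>
      continuous_const.mul (hg.comp (continuous_id.mul continuous_const))

theorem continuousOn_abelIntegral (hα : α < 1) (hg : Continuous g) (hC : ∀ s, ‖g s‖ ≤ C) :
    ContinuousOn (abelIntegral α g) (Ioi 0) := by
  refine ContinuousOn.congr (f := fun t => t ^ (1 - α) *
    ∫ v in (0 : ℝ)..1, (1 - v) ^ (-α) * g (t * v)) ?_
    fun t ht => abelIntegral_eq_rpow_mul_integral_unitInterval α g ht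
  exact (continuousOn_id.rpow_const fun t ht => Or.inl (ne_of_gt ht)).mul
    (continuous_integral_unitInterval hα hg hC).continuousOn

theorem abelIntegral_add_period_sub (hα : α < 1) (hg : Continuous g)
    (hper : Function.Periodic g T) (t : ℝ) :
    abelIntegral α g (t + T) - abelIntegral α g t
      = ∫ u in (-T)..0, (t - u) ^ (-α) * g u := by
  have hshift : abelIntegral α g (t + T) = ∫ u in (-T)..t, (t - u) ^ (-α) * g u := by
    rw [abelIntegral, ← neg_add_cancel T, ← integral_comp_add_right]
    refine integral_congr fun u _ => ?_
    rw [show t + T - (u + T) = t - u by ring, hper u]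
  have hint := intervalIntegrable_sub_rpow_neg_mul hα hg
  rw [hshift, abelIntegral, ← integral_add_adjacent_intervals
    ((hint (-T) t).trans (hint 0 t).symm) (hint 0 t), add_sub_cancel_right]

theorem norm_integral_neg_period_le (hα : 0 ≤ α) (hC : ∀ s, ‖g s‖ ≤ C) (hT : 0 ≤ T) {t : ℝ}
    (ht : 0 < t) : ‖∫ u in (-T)..0, (t - u) ^ (-α) * g u‖ ≤ C * t ^ (-α) * T := by
  have hbound : ∀ u ∈ uIoc (-T) 0, ‖(t - u) ^ (-α) * g u‖ ≤ C * t ^ (-α) := fun u hu => by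
    rw [uIoc_of_le (by linarith)] at hu
    have hkernel : (t - u) ^ (-α) ≤ t ^ (-α) :=
      Real.rpow_le_rpow_of_nonpos ht (by linarith [hu.2]) (by linarith)
    rw [norm_mul, Real.norm_of_nonneg (Real.rpow_nonneg (by linarith [hu.2]) _), mul_comm C]
    exact mul_le_mul hkernel (hC u) (norm_nonneg _) (Real.rpow_nonneg ht.le _)
  simpa [abs_of_nonneg hT] using norm_integral_le_of_norm_le_const hbound

theorem tendsto_abelIntegral_add_period_sub (hα : α ∈ Ioo 0 1) (hg : Continuous g)
    (hC : ∀ s, ‖g s‖ ≤ C) (hper : Function.Periodic g T) (hT : 0 ≤ T) :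
    Tendsto (fun t => abelIntegral α g (t + T) - abelIntegral α g t) atTop (nhds 0) := by
  simp_rw [abelIntegral_add_period_sub hα.2 hg hper]
  have hdecay : Tendsto (fun t : ℝ => C * t ^ (-α) * T) atTop (nhds 0) := by
    simpa using ((tendsto_rpow_neg_atTop hα.1).const_mul C).mul_const T
  refine squeeze_zero_norm' ?_ hdecay
  filter_upwards [eventually_gt_atTop 0] with t ht
  exact norm_integral_neg_period_le hα.1.le hC hT ht

end AbelIntegral

/-- If `f` is a continuously differentiable `T`-periodic function, `α ∈ (0,1)`, and the
Caputo fractional derivative `ᶜD^α f` is bounded on `(0,∞)`, then `ᶜD^α f` is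
S-asymptotically `T`-periodic: continuous and bounded on `(0,∞)` with
`ᶜD^α f (t+T) - ᶜD^α f (t) → 0` as `t → +∞`. -/
theorem caputo_derivative_s_asymptotically_periodic (T : ℝ) (hT : 0 < T)
    (f : ℝ → ℝ) (hf : ContDiff ℝ 1 f) (hper : Function.Periodic f T)
    (α : ℝ) (hα : α ∈ Set.Ioo (0 : ℝ) 1)
    (cD : ℝ → ℝ)
    (hcD : ∀ t : ℝ, cD t =
      (1 / Real.Gamma (1 - α)) * ∫ s in (0 : ℝ)..t, (t - s) ^ (-α) * deriv f s)
    (hbdd : ∃ M : ℝ, ∀ t ∈ Ioi (0 : ℝ), |cD t| ≤ M) :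
    ContinuousOn cD (Ioi 0) ∧ (∃ M : ℝ, ∀ t ∈ Ioi (0 : ℝ), |cD t| ≤ M) ∧
      Tendsto (fun t : ℝ => cD (t + T) - cD t) atTop (nhds 0) := by
  have hg : Continuous (deriv f) := hf.continuous_deriv le_rfl
  have hgper : Function.Periodic (deriv f) T := hper.deriv
  obtain ⟨C, hC⟩ := (hgper.isBounded_of_continuous hT.ne' hg).exists_norm_le
  replace hC : ∀ s, ‖deriv f s‖ ≤ C := fun s => hC _ (mem_range_self s)
  obtain rfl : cD = fun t => 1 / Real.Gamma (1 - α) * abelIntegral α (deriv f) t := funext hcD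
  refine ⟨continuousOn_const.mul (continuousOn_abelIntegral hα.2 hg hC), hbdd, ?_⟩
  simpa [← mul_sub] using
    (tendsto_abelIntegral_add_period_sub hα hg hC hgper hT.le).const_mul (1 / Real.Gamma (1 - α))
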